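/- Let L be a rational pseudodifferential operator over a differential field K of characteristic zero. Among all representations L = A S⁻¹ with A, S ∈ K[∂], S ≠ 0, there is a unique one in which S is monic of minimal possible order; moreover, every representation L = Ã S̃⁻¹ is obtained from the minimal one by multiplying both A and S on the right by the same nonzero element of K[∂]. -/

import Mathlib

/-- An axiomatization of the ring `R((∂⁻¹))` of pseudodifferential operators over a
commutative differential ring `(R, δ)`: elements are determined by their coefficients
`coeff A : ℤ → R` (supported in a half-line `n ≤ N`), with the product determined by
`∂ⁿ ∘ a = Σ_{j≥0} binom(n,j) δʲ(a) ∂^{n-j}`, equivalently by the symbol formula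
`coeff (A∘B) k = Σ_{m+n-j=k} binom(m,j) aₘ δʲ(bₙ)`. -/
structure PseudoDiffOps (R : Type) [CommRing R] (δ : R → R) : Type 1 where
  carrier : Type
  [ringCarrier : Ring carrier]
  /-- the embedding of `R` as the operators of order `≤ 0` with only a constant term -/
  const : R →+* carrier
  /-- the derivation `∂` as an element of the ring -/
  d : carrier
  /-- the element `∂⁻¹` -/
  dinv : carrier
  δ_add : ∀ a b : R, δ (a + b) = δ a + δ b
  δ_leibniz : ∀ a b : R, δ (a * b) = δ a * b + a * δ b
  /-- `coeff A n` is the coefficient of `∂ⁿ` in `A` -/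
  coeff : carrier → ℤ → R
  coeff_injective : Function.Injective coeff
  coeff_add : ∀ A B n, coeff (A + B) n = coeff A n + coeff B n
  coeff_one : ∀ n, coeff 1 n = if n = 0 then 1 else 0
  coeff_const : ∀ (a : R) (n), coeff (const a) n = if n = 0 then a else 0
  coeff_d : ∀ n, coeff d n = if n = 1 then 1 else 0
  coeff_dinv : ∀ n, coeff dinv n = if n = -1 then 1 else 0
  d_dinv : d * dinv = 1
  dinv_d : dinv * d = 1
  coeff_bddAbove : ∀ A, ∃ N : ℤ, ∀ n, N < n → coeff A n = 0
  exists_of_coeffs : ∀ f : ℤ → R, (∃ N : ℤ, ∀ n, N < n → f n = 0) → ∃ A, coeff A = f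
  coeff_mul : ∀ (A B : carrier) (NA NB k : ℤ),
    (∀ n, NA < n → coeff A n = 0) → (∀ n, NB < n → coeff B n = 0) →
    coeff (A * B) k =
      ∑ m ∈ Finset.Icc (k - NB) NA, ∑ j ∈ Finset.range ((NB - k + m).toNat + 1),
        ((Ring.choose m j : ℤ) : R) * (coeff A m * δ^[j] (coeff B (k + j - m)))

attribute [instance] PseudoDiffOps.ringCarrier

namespace PseudoDiffOps

variable {R : Type} [CommRing R] {δ : R → R} (P : PseudoDiffOps R δ)

/-- the order of a pseudodifferential operator: the largest `n` with `coeff A n ≠ 0`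
(junk value for `A = 0`). -/
noncomputable def ord (A : P.carrier) : ℤ := sSup {n : ℤ | P.coeff A n ≠ 0}

/-- the leading coefficient of a pseudodifferential operator -/
noncomputable def leadCoeff (A : P.carrier) : R := P.coeff A (P.ord A)

/-- `A` is a differential operator, i.e. lies in `R[∂] ⊆ R((∂⁻¹))` -/
def IsDiffOp (A : P.carrier) : Prop := ∀ n : ℤ, n < 0 → P.coeff A n = 0

/-- `A` is monic, i.e. has leading coefficient `1` -/
noncomputable def Monic (A : P.carrier) : Prop := P.leadCoeff A = 1

end PseudoDiffOps

/-- `S` is a denominator of `L`: `S ∈ K[∂] \ {0}` and `L = A S⁻¹` for some `A ∈ K[∂]` -/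
noncomputable def PseudoDiffOps.IsDenom {K : Type} [CommRing K] {δ : K → K}
    (P : PseudoDiffOps K δ) (L S : P.carrier) : Prop :=
  P.IsDiffOp S ∧ S ≠ 0 ∧ ∃ A : P.carrier, P.IsDiffOp A ∧ L = A * Ring.inverse S

/-- `S` is a monic denominator of `L` of minimal possible order -/
noncomputable def PseudoDiffOps.IsMinimalMonicDenom {K : Type} [CommRing K] {δ : K → K}
    (P : PseudoDiffOps K δ) (L S : P.carrier) : Prop :=
  P.IsDenom L S ∧ P.Monic S ∧ ∀ T : P.carrier, P.IsDenom L T → P.ord S ≤ P.ord T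

/-! Every nonzero operator is a unit of `K((∂⁻¹))`: the coefficients of its inverse are solved
for one at a time from the top. Hence `S` is a denominator of `L` exactly when `S` and `L * S` both
lie in `K[∂]`, and this condition is preserved by differences and by right multiplication by
`K[∂]`. Dividing a denominator `T` by one `S` of minimal order in `K[∂]` therefore leaves a
remainder that is a denominator of smaller order, hence zero, so `T = S * E`. Two monic
denominators of minimal order differ by a denominator of smaller order, hence coincide. -/

namespace PseudoDiffOps

section Coefficients

variable {R : Type} [CommRing R] {δ : R → R} (P : PseudoDiffOps R δ)

theorem coeff_zero (n : ℤ) : P.coeff 0 n = 0 := by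
  simpa using P.coeff_add 0 0 n

theorem coeff_neg (A : P.carrier) (n : ℤ) : P.coeff (-A) n = -P.coeff A n := by
  have h := P.coeff_add A (-A) n
  rw [add_neg_cancel, P.coeff_zero] at h
  exact eq_neg_of_add_eq_zero_right h.symm

theorem coeff_sub (A B : P.carrier) (n : ℤ) :
    P.coeff (A - B) n = P.coeff A n - P.coeff B n := by
  rw [sub_eq_add_neg, P.coeff_add, P.coeff_neg, sub_eq_add_neg]

theorem delta_zero (P : PseudoDiffOps R δ) : δ 0 = 0 := by
  simpa using P.δ_add 0 0

theorem bddAbove_support (A : P.carrier) : BddAbove {n : ℤ | P.coeff A n ≠ 0} := by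
  obtain ⟨N, hN⟩ := P.coeff_bddAbove A
  exact ⟨N, fun n hn => not_lt.mp fun h => hn (hN n h)⟩

theorem support_nonempty {A : P.carrier} (hA : A ≠ 0) :
    {n : ℤ | P.coeff A n ≠ 0}.Nonempty := by
  by_contra h
  refine hA (P.coeff_injective (funext fun n => ?_))
  rw [P.coeff_zero]
  by_contra hn
  exact h ⟨n, hn⟩

theorem leadCoeff_ne_zero {A : P.carrier} (hA : A ≠ 0) : P.leadCoeff A ≠ 0 :=
  Int.csSup_mem (P.support_nonempty hA) (P.bddAbove_support A)

theorem le_ord {A : P.carrier} {n : ℤ} (h : P.coeff A n ≠ 0) : n ≤ P.ord A :=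
  le_csSup (P.bddAbove_support A) h

theorem coeff_eq_zero_of_ord_lt {A : P.carrier} {n : ℤ} (h : P.ord A < n) :
    P.coeff A n = 0 :=
  not_not.mp fun hn => (P.le_ord hn).not_gt h

theorem ord_eq_of_coeff {A : P.carrier} {N : ℤ} (hN : P.coeff A N ≠ 0)
    (h : ∀ n, N < n → P.coeff A n = 0) : P.ord A = N := by
  refine le_antisymm ?_ (P.le_ord hN)
  by_contra hlt
  exact P.leadCoeff_ne_zero (fun h0 => hN (by rw [h0, P.coeff_zero])) (h _ (not_le.mp hlt))

theorem ord_sub_lt {A B : P.carrier} (hAB : A - B ≠ 0) (hord : P.ord A = P.ord B)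
    (hlead : P.leadCoeff A = P.leadCoeff B) : P.ord (A - B) < P.ord A := by
  have hvanish : ∀ n, P.ord A ≤ n → P.coeff (A - B) n = 0 := by
    intro n hn
    rcases hn.eq_or_lt with rfl | hlt
    · rw [P.coeff_sub, sub_eq_zero]
      exact hlead.trans (by rw [leadCoeff, hord])
    · rw [P.coeff_sub, P.coeff_eq_zero_of_ord_lt hlt,
        P.coeff_eq_zero_of_ord_lt (hord ▸ hlt), sub_zero]
  exact not_le.mp fun h => P.leadCoeff_ne_zero hAB (hvanish _ h)

theorem coeff_mul_ord {A B : P.carrier} (k : ℤ) :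
    P.coeff (A * B) k =
      ∑ m ∈ Finset.Icc (k - P.ord B) (P.ord A),
        ∑ j ∈ Finset.range ((P.ord B - k + m).toNat + 1),
          ((Ring.choose m j : ℤ) : R) * (P.coeff A m * δ^[j] (P.coeff B (k + j - m))) :=
  P.coeff_mul A B _ _ k (fun _ => P.coeff_eq_zero_of_ord_lt)
    (fun _ => P.coeff_eq_zero_of_ord_lt)

theorem coeff_mul_of_ord_add_ord_lt {A B : P.carrier} {k : ℤ}
    (hk : P.ord A + P.ord B < k) : P.coeff (A * B) k = 0 := by
  rw [P.coeff_mul_ord, Finset.Icc_eq_empty (by omega), Finset.sum_empty]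

theorem coeff_mul_ord_add_ord (A B : P.carrier) :
    P.coeff (A * B) (P.ord A + P.ord B) = P.leadCoeff A * P.leadCoeff B := by
  rw [P.coeff_mul_ord, add_sub_cancel_right, Finset.Icc_self, Finset.sum_singleton,
    show (P.ord B - (P.ord A + P.ord B) + P.ord A).toNat = 0 by omega, Finset.sum_range_one,
    Ring.choose_zero_right, Int.cast_one, one_mul, Function.iterate_zero_apply,
    Nat.cast_zero, add_zero, add_sub_cancel_left]
  rfl

end Coefficients

section Domain

variable {R : Type} [CommRing R] [NoZeroDivisors R] {δ : R → R} (P : PseudoDiffOps R δ)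

theorem coeff_mul_ord_add_ord_ne_zero {A B : P.carrier} (hA : A ≠ 0) (hB : B ≠ 0) :
    P.coeff (A * B) (P.ord A + P.ord B) ≠ 0 := by
  rw [P.coeff_mul_ord_add_ord]
  exact mul_ne_zero (P.leadCoeff_ne_zero hA) (P.leadCoeff_ne_zero hB)

instance : NoZeroDivisors P.carrier where
  eq_zero_or_eq_zero_of_mul_eq_zero {A B} h := by
    by_contra! hAB
    exact P.coeff_mul_ord_add_ord_ne_zero hAB.1 hAB.2 (h ▸ P.coeff_zero _)

theorem ord_mul {A B : P.carrier} (hA : A ≠ 0) (hB : B ≠ 0) :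
    P.ord (A * B) = P.ord A + P.ord B :=
  P.ord_eq_of_coeff (P.coeff_mul_ord_add_ord_ne_zero hA hB)
    fun _ => P.coeff_mul_of_ord_add_ord_lt

theorem leadCoeff_mul {A B : P.carrier} (hA : A ≠ 0) (hB : B ≠ 0) :
    P.leadCoeff (A * B) = P.leadCoeff A * P.leadCoeff B := by
  rw [leadCoeff, P.ord_mul hA hB, P.coeff_mul_ord_add_ord]

end Domain

section Monomials

variable {R : Type} [CommRing R] {δ : R → R} (P : PseudoDiffOps R δ)

theorem ord_const {c : R} (hc : c ≠ 0) : P.ord (P.const c) = 0 :=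
  P.ord_eq_of_coeff (by rwa [P.coeff_const, if_pos rfl])
    fun n hn => by rw [P.coeff_const, if_neg hn.ne']

theorem leadCoeff_const {c : R} (hc : c ≠ 0) : P.leadCoeff (P.const c) = c := by
  rw [leadCoeff, P.ord_const hc, P.coeff_const, if_pos rfl]

theorem const_ne_zero {c : R} (hc : c ≠ 0) : P.const c ≠ 0 := fun h =>
  hc (by simpa [h, P.coeff_zero] using (P.coeff_const c 0).symm)

variable [Nontrivial R]

theorem ord_d : P.ord P.d = 1 :=
  P.ord_eq_of_coeff (by rw [P.coeff_d, if_pos rfl]; exact one_ne_zero)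
    fun n hn => by rw [P.coeff_d, if_neg hn.ne']

theorem leadCoeff_d : P.leadCoeff P.d = 1 := by
  rw [leadCoeff, P.ord_d, P.coeff_d, if_pos rfl]

theorem d_ne_zero : P.d ≠ 0 := fun h =>
  one_ne_zero (by simpa [h, P.coeff_zero] using (P.coeff_d 1).symm : (1 : R) = 0)

instance : Nontrivial P.carrier := ⟨⟨P.d, 0, P.d_ne_zero⟩⟩

variable [NoZeroDivisors R]

theorem ord_const_mul_d_pow {c : R} (hc : c ≠ 0) (k : ℕ) :
    P.ord (P.const c * P.d ^ k) = k := by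
  induction k with
  | zero => rw [pow_zero, mul_one, P.ord_const hc, Nat.cast_zero]
  | succ k ih =>
    rw [pow_succ, ← mul_assoc,
      P.ord_mul (mul_ne_zero (P.const_ne_zero hc) (pow_ne_zero k P.d_ne_zero)) P.d_ne_zero,
      ih, P.ord_d, Nat.cast_succ]

theorem leadCoeff_const_mul_d_pow {c : R} (hc : c ≠ 0) (k : ℕ) :
    P.leadCoeff (P.const c * P.d ^ k) = c := by
  induction k with
  | zero => rw [pow_zero, mul_one, P.leadCoeff_const hc]
  | succ k ih =>
    rw [pow_succ, ← mul_assoc,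
      P.leadCoeff_mul (mul_ne_zero (P.const_ne_zero hc) (pow_ne_zero k P.d_ne_zero)) P.d_ne_zero,
      ih, P.leadCoeff_d, mul_one]

end Monomials

section DiffOps

variable {R : Type} [CommRing R] {δ : R → R} (P : PseudoDiffOps R δ)

theorem isDiffOp_mul {A B : P.carrier} (hA : P.IsDiffOp A) (hB : P.IsDiffOp B) :
    P.IsDiffOp (A * B) := by
  intro k hk
  rw [P.coeff_mul_ord]
  refine Finset.sum_eq_zero fun m _ => Finset.sum_eq_zero fun j _ => ?_
  rcases lt_or_ge m 0 with hm | hm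
  · rw [hA m hm, zero_mul, mul_zero]
  rcases lt_or_ge (k + j - m) 0 with hkjm | hkjm
  · rw [hB _ hkjm, Function.iterate_fixed P.delta_zero, mul_zero, mul_zero]
  · lift m to ℕ using hm
    rw [Ring.choose_natCast, Nat.choose_eq_zero_of_lt (by omega), Nat.cast_zero, Int.cast_zero,
      zero_mul]

def diffOps : Subring P.carrier where
  carrier := {A | P.IsDiffOp A}
  zero_mem' n _ := P.coeff_zero n
  one_mem' n hn := by rw [P.coeff_one, if_neg hn.ne]
  add_mem' hA hB n hn := by rw [P.coeff_add, hA n hn, hB n hn, add_zero]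
  neg_mem' hA n hn := by rw [P.coeff_neg, hA n hn, neg_zero]
  mul_mem' := P.isDiffOp_mul

theorem const_mem_diffOps (c : R) : P.const c ∈ P.diffOps := fun n hn => by
  rw [P.coeff_const, if_neg hn.ne]

theorem d_mem_diffOps : P.d ∈ P.diffOps := fun n hn => by
  rw [P.coeff_d, if_neg (by omega)]

theorem ord_nonneg {A : P.carrier} (hA : A ≠ 0) (hD : A ∈ P.diffOps) : 0 ≤ P.ord A :=
  not_lt.mp fun h => P.leadCoeff_ne_zero hA (hD _ h)

end DiffOps

section Inverse

variable {K : Type} [Field K]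

/-- The coefficient of `∂ᵏ` in `S * T` is `s_N t_{k-N}` plus terms in the `tₙ` with
`n > k - N`, so solving `(S * T)ₖ = [k = 0]` for `t_{k-N}` from the top down gives the
coefficients of a right inverse of `S` (with coefficients `s` and order `N`). The guard on the
recursive call only records that the index increases; it holds at every term except
`m = N, j = 0`, which it removes. -/
noncomputable def rightInvCoeff (δ : K → K) (s : ℤ → K) (N n : ℤ) : K :=
  if -N < n then 0 else
    (s N)⁻¹ * ((if n + N = 0 then 1 else 0) -
      ∑ m ∈ Finset.Icc (n + N + N) N,
        ∑ j ∈ Finset.range ((-N - (n + N) + m).toNat + 1),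
          ((Ring.choose m j : ℤ) : K) * (s m * δ^[j]
            (if (-N - (n + N + j - m)).toNat < (-N - n).toNat then
              rightInvCoeff δ s N (n + N + j - m) else 0)))
termination_by (-N - n).toNat

variable {δ : K → K} (P : PseudoDiffOps K δ)

theorem exists_mul_eq_one {S : P.carrier} (hS : S ≠ 0) : ∃ T, S * T = 1 := by
  obtain ⟨T, hT⟩ := P.exists_of_coeffs (rightInvCoeff δ (P.coeff S) (P.ord S))
    ⟨-P.ord S, fun n hn => by rw [rightInvCoeff, if_pos hn]⟩
  refine ⟨T, P.coeff_injective (funext fun k => ?_)⟩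
  rw [P.coeff_mul S T (P.ord S) (-P.ord S) k (fun _ => P.coeff_eq_zero_of_ord_lt)
    (fun n hn => by rw [hT, rightInvCoeff, if_pos hn]), P.coeff_one, hT, sub_neg_eq_add]
  rcases lt_or_ge 0 k with hk | hk
  · rw [Finset.Icc_eq_empty (by omega), Finset.sum_empty, if_neg hk.ne']
  set N := P.ord S
  set t := rightInvCoeff δ (P.coeff S) N with ht
  have hlead : P.coeff S N ≠ 0 := P.leadCoeff_ne_zero hS
  have hsplit : ∀ m ∈ Finset.Icc (k + N) N, ∀ j ∈ Finset.range ((-N - k + m).toNat + 1),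
      ((Ring.choose m j : ℤ) : K) * (P.coeff S m * δ^[j] (t (k + j - m))) =
        ((Ring.choose m j : ℤ) : K) * (P.coeff S m * δ^[j]
          (if (-N - (k + j - m)).toNat < (-N - (k - N)).toNat then t (k + j - m) else 0)) +
        if m = N ∧ j = 0 then P.coeff S N * t (k - N) else 0 := by
    intro m hm j hj
    rw [Finset.mem_Icc] at hm
    rw [Finset.mem_range] at hj
    by_cases htop : m = N ∧ j = 0
    · obtain ⟨rfl, rfl⟩ := htop
      rw [if_neg (by omega), if_pos ⟨rfl, rfl⟩, Function.iterate_fixed P.delta_zero,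
        Ring.choose_zero_right]
      simp
    · rw [if_pos (by omega), if_neg htop, add_zero]
  have htop : ∑ m ∈ Finset.Icc (k + N) N, ∑ j ∈ Finset.range ((-N - k + m).toNat + 1),
      (if m = N ∧ j = 0 then P.coeff S N * t (k - N) else 0) = P.coeff S N * t (k - N) := by
    rw [Finset.sum_eq_single_of_mem N (Finset.mem_Icc.mpr ⟨by omega, le_rfl⟩),
      Finset.sum_eq_single_of_mem 0 (Finset.mem_range.mpr (Nat.succ_pos _)), if_pos ⟨rfl, rfl⟩]
    · exact fun j _ hj => if_neg fun h => hj h.2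
    · exact fun m _ hm => Finset.sum_eq_zero fun j _ => if_neg fun h => hm h.1
  rw [Finset.sum_congr rfl fun m hm => Finset.sum_congr rfl (hsplit m hm)]
  simp only [Finset.sum_add_distrib]
  rw [htop, ht, rightInvCoeff.eq_1 _ _ _ (k - N), if_neg (by omega), sub_add_cancel,
    mul_inv_cancel_left₀ hlead, add_sub_cancel]

theorem isUnit_of_ne_zero {S : P.carrier} (hS : S ≠ 0) : IsUnit S := by
  obtain ⟨T, hST⟩ := P.exists_mul_eq_one hS
  obtain ⟨U, hTU⟩ := P.exists_mul_eq_one (right_ne_zero_of_mul (hST ▸ one_ne_zero))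
  exact ⟨⟨S, T, hST, left_inv_eq_right_inv hST hTU ▸ hTU⟩, rfl⟩

end Inverse

section Denominators

variable {K : Type} [Field K] {δ : K → K} (P : PseudoDiffOps K δ)

theorem exists_eq_mul_add {S T : P.carrier} (hS : S ∈ P.diffOps) (hS0 : S ≠ 0)
    (hT : T ∈ P.diffOps) : ∃ Q ∈ P.diffOps, ∃ R ∈ P.diffOps,
      T = S * Q + R ∧ (R = 0 ∨ P.ord R < P.ord S) := by
  induction hn : (P.ord T).toNat using Nat.strong_induction_on generalizing T with
  | _ n ih =>
  by_cases hsmall : T = 0 ∨ P.ord T < P.ord S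
  · exact ⟨0, zero_mem _, T, hT, by rw [mul_zero, zero_add], hsmall⟩
  obtain ⟨hT0, hST⟩ := not_or.mp hsmall
  -- subtracting `S * (c ∂ᵏ)` kills the leading term of `T`
  have hc : P.leadCoeff T / P.leadCoeff S ≠ 0 :=
    div_ne_zero (P.leadCoeff_ne_zero hT0) (P.leadCoeff_ne_zero hS0)
  set C := P.const (P.leadCoeff T / P.leadCoeff S) * P.d ^ (P.ord T - P.ord S).toNat
  have hC0 : C ≠ 0 := mul_ne_zero (P.const_ne_zero hc) (pow_ne_zero _ P.d_ne_zero)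
  have hC : C ∈ P.diffOps := mul_mem (P.const_mem_diffOps _) (pow_mem P.d_mem_diffOps _)
  have hrest : T - S * C ∈ P.diffOps := sub_mem hT (mul_mem hS hC)
  by_cases hrest0 : T - S * C = 0
  · exact ⟨C, hC, 0, zero_mem _, by rw [add_zero, ← sub_eq_zero, hrest0], Or.inl rfl⟩
  have hlt : P.ord (T - S * C) < P.ord T := by
    refine P.ord_sub_lt hrest0 ?_ ?_
    · rw [P.ord_mul hS0 hC0, P.ord_const_mul_d_pow hc]
      omega
    · rw [P.leadCoeff_mul hS0 hC0, P.leadCoeff_const_mul_d_pow hc,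
        mul_div_cancel₀ _ (P.leadCoeff_ne_zero hS0)]
  obtain ⟨Q, hQ, R, hR, hrestQR, hRS⟩ := ih _ (by have := P.ord_nonneg hrest0 hrest; omega)
    hrest rfl
  refine ⟨Q + C, add_mem hQ hC, R, hR, ?_, hRS⟩
  rw [mul_add, add_right_comm, ← hrestQR, sub_add_cancel]

theorem isDenom_iff {L S : P.carrier} :
    P.IsDenom L S ↔ S ∈ P.diffOps ∧ S ≠ 0 ∧ L * S ∈ P.diffOps := by
  refine ⟨fun ⟨hS, hS0, _, _, hL⟩ => ⟨hS, hS0, ?_⟩,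
    fun ⟨hS, hS0, hLS⟩ => ⟨hS, hS0, L * S, hLS, ?_⟩⟩
  · rwa [hL, Ring.inverse_mul_cancel_right _ _ (P.isUnit_of_ne_zero hS0)]
  · rw [Ring.mul_inverse_cancel_right _ _ (P.isUnit_of_ne_zero hS0)]

theorem eq_mul_of_eq_mul_inverse {L A S : P.carrier} (hS0 : S ≠ 0)
    (h : L = A * Ring.inverse S) : A = L * S := by
  rw [h, Ring.inverse_mul_cancel_right _ _ (P.isUnit_of_ne_zero hS0)]

theorem isDenom_mul_right {L S E : P.carrier} (hS : P.IsDenom L S) (hE : E ∈ P.diffOps)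
    (hE0 : E ≠ 0) : P.IsDenom L (S * E) := by
  obtain ⟨hS, hS0, hLS⟩ := P.isDenom_iff.mp hS
  refine P.isDenom_iff.mpr ⟨mul_mem hS hE, mul_ne_zero hS0 hE0, ?_⟩
  rw [← mul_assoc]
  exact mul_mem hLS hE

theorem exists_isMinimalMonicDenom {L : P.carrier} (h : ∃ S, P.IsDenom L S) :
    ∃ S, P.IsMinimalMonicDenom L S := by
  classical
  have hex : ∃ n : ℕ, ∃ S, P.IsDenom L S ∧ P.ord S = n := by
    obtain ⟨S, hS⟩ := h
    exact ⟨(P.ord S).toNat, S, hS, (Int.toNat_of_nonneg (P.ord_nonneg hS.2.1 hS.1)).symm⟩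
  obtain ⟨S, hS, hSord⟩ := Nat.find_spec hex
  have hmin : ∀ T, P.IsDenom L T → P.ord S ≤ P.ord T := fun T hT => by
    have hT0 := P.ord_nonneg hT.2.1 hT.1
    have := Nat.find_min' hex (m := (P.ord T).toNat) ⟨T, hT, (Int.toNat_of_nonneg hT0).symm⟩
    omega
  have hc : (P.leadCoeff S)⁻¹ ≠ 0 := inv_ne_zero (P.leadCoeff_ne_zero hS.2.1)
  have hc0 : P.const (P.leadCoeff S)⁻¹ ≠ 0 := P.const_ne_zero hc
  refine ⟨S * P.const (P.leadCoeff S)⁻¹, P.isDenom_mul_right hS (P.const_mem_diffOps _) hc0,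
    ?_, ?_⟩
  · rw [Monic, P.leadCoeff_mul hS.2.1 hc0, P.leadCoeff_const hc,
      mul_inv_cancel₀ (P.leadCoeff_ne_zero hS.2.1)]
  · intro T hT
    rw [P.ord_mul hS.2.1 hc0, P.ord_const hc, add_zero]
    exact hmin T hT

theorem exists_eq_mul_of_isDenom {L S T : P.carrier} (hS : P.IsDenom L S)
    (hmin : ∀ T, P.IsDenom L T → P.ord S ≤ P.ord T) (hT : P.IsDenom L T) :
    ∃ E ∈ P.diffOps, T = S * E := by
  obtain ⟨hSdiff, hS0, hLS⟩ := P.isDenom_iff.mp hS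
  obtain ⟨hTdiff, -, hLT⟩ := P.isDenom_iff.mp hT
  obtain ⟨Q, hQ, R, hR, rfl, hRS⟩ := P.exists_eq_mul_add hSdiff hS0 hTdiff
  refine ⟨Q, hQ, ?_⟩
  have hLR : L * R ∈ P.diffOps := by
    rw [show L * R = L * (S * Q + R) - L * S * Q by noncomm_ring]
    exact sub_mem hLT (mul_mem hLS hQ)
  by_cases hR0 : R = 0
  · rw [hR0, add_zero]
  · exact absurd (hmin R (P.isDenom_iff.mpr ⟨hR, hR0, hLR⟩)) (hRS.resolve_left hR0).not_ge

theorem eq_of_isMinimalMonicDenom {L S S' : P.carrier} (hS : P.IsMinimalMonicDenom L S)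
    (hS' : P.IsMinimalMonicDenom L S') : S' = S := by
  obtain ⟨hSden, hSmonic, hSmin⟩ := hS
  obtain ⟨hS'den, hS'monic, hS'min⟩ := hS'
  obtain ⟨hSdiff, -, hLS⟩ := P.isDenom_iff.mp hSden
  obtain ⟨hS'diff, -, hLS'⟩ := P.isDenom_iff.mp hS'den
  have hord : P.ord S' = P.ord S := le_antisymm (hS'min S hSden) (hSmin S' hS'den)
  by_contra hne
  have hsub : S' - S ≠ 0 := sub_ne_zero.mpr hne
  have hden : P.IsDenom L (S' - S) :=
    P.isDenom_iff.mpr ⟨sub_mem hS'diff hSdiff, hsub, mul_sub L S' S ▸ sub_mem hLS' hLS⟩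
  exact (P.ord_sub_lt hsub hord (hS'monic.trans hSmonic.symm)).not_ge (hord ▸ hSmin _ hden)

end Denominators

end PseudoDiffOps

theorem rational_minimal_right_fraction_general {K : Type} [Field K] {δ : K → K}
    (P : PseudoDiffOps K δ) (L : P.carrier)
    (hL : ∃ A S : P.carrier, P.IsDiffOp A ∧ P.IsDiffOp S ∧ S ≠ 0 ∧
      L = A * Ring.inverse S) :
    (∃! S : P.carrier, P.IsMinimalMonicDenom L S) ∧
    (∀ A S : P.carrier, P.IsMinimalMonicDenom L S → P.IsDiffOp A →
      L = A * Ring.inverse S →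
      ∀ A' S' : P.carrier, P.IsDiffOp A' → P.IsDiffOp S' → S' ≠ 0 →
        L = A' * Ring.inverse S' →
        ∃ E : P.carrier, P.IsDiffOp E ∧ E ≠ 0 ∧ A' = A * E ∧ S' = S * E) := by
  obtain ⟨A₁, S₁, hA₁, hS₁, hS₁0, hL₁⟩ := hL
  obtain ⟨S₀, hS₀⟩ := P.exists_isMinimalMonicDenom ⟨S₁, hS₁, hS₁0, A₁, hA₁, hL₁⟩
  refine ⟨⟨S₀, hS₀, fun _ hS => P.eq_of_isMinimalMonicDenom hS₀ hS⟩, ?_⟩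
  intro A S hS _ hLAS A' S' hA' hS' hS'0 hLAS'
  obtain ⟨E, hE, rfl⟩ := P.exists_eq_mul_of_isDenom hS.1 hS.2.2 ⟨hS', hS'0, A', hA', hLAS'⟩
  refine ⟨E, hE, right_ne_zero_of_mul hS'0, ?_, rfl⟩
  rw [P.eq_mul_of_eq_mul_inverse hS'0 hLAS', P.eq_mul_of_eq_mul_inverse hS.1.2.1 hLAS,
    mul_assoc]

/-- a rational pseudodifferential operator `L` has a unique
representation `L = A S⁻¹` with `S` monic of minimal possible order; any other
representation `L = Ã S̃⁻¹` is obtained from the minimal one by multiplying both `A`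
and `S` on the right by the same nonzero element of `K[∂]`. -/
theorem rational_minimal_right_fraction {K : Type} [Field K] [CharZero K] {δ : K → K}
    (P : PseudoDiffOps K δ) (L : P.carrier)
    (hL : ∃ A S : P.carrier, P.IsDiffOp A ∧ P.IsDiffOp S ∧ S ≠ 0 ∧
      L = A * Ring.inverse S) :
    (∃! S : P.carrier, P.IsMinimalMonicDenom L S) ∧
    (∀ A S : P.carrier, P.IsMinimalMonicDenom L S → P.IsDiffOp A →
      L = A * Ring.inverse S →
      ∀ A' S' : P.carrier, P.IsDiffOp A' → P.IsDiffOp S' → S' ≠ 0 →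
        L = A' * Ring.inverse S' →
        ∃ E : P.carrier, P.IsDiffOp E ∧ E ≠ 0 ∧ A' = A * E ∧ S' = S * E) :=
  rational_minimal_right_fraction_general P L hL
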